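/- arXiv:1905.06550 — 8 statements merged into one kernel-verified Lean document; each statement's English description precedes it below -/
import Mathlib

section
/- Let H_g and H_β be symmetric N×N real matrices and let H := [[H_g, H_β],[H_β, −H_g]] be the associated 2N×2N block matrix; assume H is invertible. Let Σ_pp, Σ_qq, Σ_pq be N×N real diagonal matrices such that d_i := Σ_pp(i,i)·Σ_qq(i,i) − Σ_pq(i,i)² ≠ 0 for every i, let D be the diagonal matrix with D(i,i) = d_i, let Σ := [[Σ_pp, Σ_pq],[Σ_pq, Σ_qq]], and let Σ_v := H⁻¹ Σ H⁻¹. Then Σ_v is invertible and Σ_v⁻¹ = [[J_vv, J_vθ],[J_θv, J_θθ]], where J_vv = H_g D⁻¹(Σ_qq H_g − Σ_pq H_β) − H_β D⁻¹(Σ_pq H_g − Σ_pp H_β), J_vθ = H_g D⁻¹(Σ_qq H_β + Σ_pq H_g) − H_β D⁻¹(Σ_pq H_β + Σ_pp H_g), J_θv = H_β D⁻¹(Σ_qq H_g − Σ_pq H_β) + H_g D⁻¹(Σ_pq H_g − Σ_pp H_β), and J_θθ = H_β D⁻¹(Σ_qq H_β + Σ_pq H_g) + H_g D⁻¹(Σ_pq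 H_β + Σ_pp H_g). -/
open Matrix

/-!
Since `Σ_v = H⁻¹ Σ H⁻¹`, its inverse is `H Σ⁻¹ H`. The blocks of `Σ` are diagonal, hence pairwise
commuting, so `Σ` inverts like a `2 × 2` matrix over a commutative ring: `Σ⁻¹` is `D⁻¹` times the
adjugate block matrix `[[Σ_qq, -Σ_pq], [-Σ_pq, Σ_pp]]`, where `D = Σ_pp Σ_qq - Σ_pq²` plays the
role of the determinant. Multiplying out `H Σ⁻¹ H` blockwise gives the four blocks.
-/

namespace Matrix

variable {n R : Type*} [Fintype n]

theorem IsDiag.commute [DecidableEq n] [CommSemiring R] {A B : Matrix n n R}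
    (hA : A.IsDiag) (hB : B.IsDiag) : Commute A B := by
  rw [← hA.diagonal_diag, ← hB.diagonal_diag]
  exact commute_diagonal _ _

theorem fromBlocks_adj_mul_fromBlocks_of_commute [Ring R] {A B C : Matrix n n R}
    (hAB : Commute A B) (hBC : Commute B C) (hAC : Commute A C) :
    fromBlocks C (-B) (-B) A * fromBlocks A B B C =
      fromBlocks (A * C - B * B) 0 0 (A * C - B * B) := by
  rw [fromBlocks_multiply, hAC.eq]
  congr 1
  · noncomm_ring
  · rw [neg_mul, hBC.eq, add_neg_cancel]
  · rw [neg_mul, hAB.eq, neg_add_cancel]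
  · noncomm_ring

theorem fromBlocks_inv_mul_adj_mul_fromBlocks_of_commute [DecidableEq n] [CommRing R]
    {A B C : Matrix n n R}
    (hAB : Commute A B) (hBC : Commute B C) (hAC : Commute A C)
    (hΔ : IsUnit (A * C - B * B)) :
    (fromBlocks (A * C - B * B)⁻¹ 0 0 (A * C - B * B)⁻¹ * fromBlocks C (-B) (-B) A) *
      fromBlocks A B B C = 1 := by
  have hΔdet := (isUnit_iff_isUnit_det _).1 hΔ
  rw [Matrix.mul_assoc, fromBlocks_adj_mul_fromBlocks_of_commute hAB hBC hAC,
    fromBlocks_multiply, nonsing_inv_mul _ hΔdet]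
  simp

end Matrix

theorem stmt1_general (N : ℕ) (Hg Hb : Matrix (Fin N) (Fin N) ℝ)
    (H : Matrix (Fin N ⊕ Fin N) (Fin N ⊕ Fin N) ℝ)
    (hH : H = Matrix.fromBlocks Hg Hb Hb (-Hg))
    (hHu : IsUnit H)
    (Spp Sqq Spq : Matrix (Fin N) (Fin N) ℝ)
    (hSpp : Spp.IsDiag) (hSqq : Sqq.IsDiag) (hSpq : Spq.IsDiag)
    (d : Fin N → ℝ) (hd : ∀ i, d i = Spp i i * Sqq i i - (Spq i i) ^ 2)
    (hd0 : ∀ i, d i ≠ 0)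
    (D : Matrix (Fin N) (Fin N) ℝ) (hD : D = Matrix.diagonal d)
    (S : Matrix (Fin N ⊕ Fin N) (Fin N ⊕ Fin N) ℝ)
    (hS : S = Matrix.fromBlocks Spp Spq Spq Sqq)
    (Sv : Matrix (Fin N ⊕ Fin N) (Fin N ⊕ Fin N) ℝ)
    (hSv : Sv = H⁻¹ * S * H⁻¹) :
    IsUnit Sv ∧
      Sv⁻¹ = Matrix.fromBlocks
        (Hg * D⁻¹ * (Sqq * Hg - Spq * Hb) - Hb * D⁻¹ * (Spq * Hg - Spp * Hb))
        (Hg * D⁻¹ * (Sqq * Hb + Spq * Hg) - Hb * D⁻¹ * (Spq * Hb + Spp * Hg))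
        (Hb * D⁻¹ * (Sqq * Hg - Spq * Hb) + Hg * D⁻¹ * (Spq * Hg - Spp * Hb))
        (Hb * D⁻¹ * (Sqq * Hb + Spq * Hg) + Hg * D⁻¹ * (Spq * Hb + Spp * Hg)) := by
  have hD_eq : Spp * Sqq - Spq * Spq = D := by
    rw [hD, ← hSpp.diagonal_diag, ← hSqq.diagonal_diag, ← hSpq.diagonal_diag,
      diagonal_mul_diagonal, diagonal_mul_diagonal, diagonal_sub]
    exact congrArg diagonal (funext fun i => by simp [hd, sq])
  have hDu : IsUnit D := by
    rw [hD, isUnit_diagonal, Pi.isUnit_iff]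
    exact fun i => (hd0 i).isUnit
  have hS_left_inv := fromBlocks_inv_mul_adj_mul_fromBlocks_of_commute
    (hSpp.commute hSpq) (hSpq.commute hSqq) (hSpp.commute hSqq) (hD_eq ▸ hDu)
  rw [hD_eq, ← hS] at hS_left_inv
  have hSu : IsUnit S := (isUnit_iff_isUnit_det S).2 (isUnit_det_of_left_inverse hS_left_inv)
  have hHi : IsUnit H⁻¹ := isUnit_nonsing_inv_iff.2 hHu
  refine ⟨hSv ▸ (hHi.mul hSu).mul hHi, ?_⟩
  rw [hSv, Matrix.mul_inv_rev, Matrix.mul_inv_rev,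
    nonsing_inv_nonsing_inv H ((isUnit_iff_isUnit_det H).1 hHu), inv_eq_left_inv hS_left_inv, hH]
  simp only [fromBlocks_multiply]
  congr 1 <;> noncomm_ring

/-- Lemma 1 of the paper: blocks of the inverse voltage covariance matrix
`Σ_v⁻¹` where `Σ_v = H⁻¹ Σ H⁻¹`, `H = [[H_g, H_β],[H_β, −H_g]]` and `Σ` has diagonal blocks. -/
theorem stmt1 (N : ℕ) (Hg Hb : Matrix (Fin N) (Fin N) ℝ)
    (hHg : Hg.IsSymm) (hHb : Hb.IsSymm)
    (H : Matrix (Fin N ⊕ Fin N) (Fin N ⊕ Fin N) ℝ)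
    (hH : H = Matrix.fromBlocks Hg Hb Hb (-Hg))
    (hHu : IsUnit H)
    (Spp Sqq Spq : Matrix (Fin N) (Fin N) ℝ)
    (hSpp : Spp.IsDiag) (hSqq : Sqq.IsDiag) (hSpq : Spq.IsDiag)
    (d : Fin N → ℝ) (hd : ∀ i, d i = Spp i i * Sqq i i - (Spq i i) ^ 2)
    (hd0 : ∀ i, d i ≠ 0)
    (D : Matrix (Fin N) (Fin N) ℝ) (hD : D = Matrix.diagonal d)
    (S : Matrix (Fin N ⊕ Fin N) (Fin N ⊕ Fin N) ℝ)
    (hS : S = Matrix.fromBlocks Spp Spq Spq Sqq)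
    (Sv : Matrix (Fin N ⊕ Fin N) (Fin N ⊕ Fin N) ℝ)
    (hSv : Sv = H⁻¹ * S * H⁻¹) :
    IsUnit Sv ∧
      Sv⁻¹ = Matrix.fromBlocks
        (Hg * D⁻¹ * (Sqq * Hg - Spq * Hb) - Hb * D⁻¹ * (Spq * Hg - Spp * Hb))
        (Hg * D⁻¹ * (Sqq * Hb + Spq * Hg) - Hb * D⁻¹ * (Spq * Hb + Spp * Hg))
        (Hb * D⁻¹ * (Sqq * Hg - Spq * Hb) + Hg * D⁻¹ * (Spq * Hg - Spp * Hb))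
        (Hb * D⁻¹ * (Sqq * Hb + Spq * Hg) + Hg * D⁻¹ * (Spq * Hb + Spp * Hg)) :=
  stmt1_general N Hg Hb H hH hHu Spp Sqq Spq hSpp hSqq hSpq d hd hd0 D hD S hS Sv hSv
end

section
/- Let G be a finite simple graph with minimum cycle length greater than 6 (G contains no cycle of length at most 6), and let H be the hybrid graph of G: distinct vertices are adjacent in H iff they are adjacent in G or have a common neighbor in G. Suppose i and j are adjacent in H. Then the following are equivalent: (a) there exist vertices k and l with k ≠ l, k ∉ {i,j}, l ∉ {i,j}, such that k and l are each adjacent in H to both i and j, and k and l are not adjacent in H; (b) i and j are adjacent in G and both i and j have degree at least 2 in G. -/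
/-!
A hybrid edge closing a path of length `L ≥ 3` would produce a cycle of length at most `L + 2`.
If `i` and `j` are not adjacent but have a common neighbour `m`, then any common hybrid
neighbour `x` of `i` and `j` is `m` or a neighbour of `m`: otherwise the neighbours of `i` and
`j` on the way to `x` extend `i - m - j` to a path of length 4 whose ends are hybrid-adjacent
through `x`. Two such vertices are hybrid-adjacent through `m`, so a non-adjacent pair `k, l`
forces `i ~ j`, and `k, l` then supply second neighbours of `i` and `j`. Conversely, further
neighbours `k` of `i` and `l` of `j` give a path `k - i - j - l` of length 3.
-/

open Matrix

/-- The hybrid graph of `G`: distinct vertices are adjacent iff they are adjacent in `G`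
or have a common neighbor in `G`. -/
def hybrid {V : Type*} (G : SimpleGraph V) : SimpleGraph V where
  Adj i j := i ≠ j ∧ (G.Adj i j ∨ ∃ k, G.Adj i k ∧ G.Adj k j)
  symm := by
    constructor
    rintro i j ⟨hne, h | ⟨k, h1, h2⟩⟩
    · exact ⟨hne.symm, Or.inl h.symm⟩
    · exact ⟨hne.symm, Or.inr ⟨k, h2.symm, h1.symm⟩⟩
  loopless := by
    constructor
    rintro i ⟨hne, -⟩
    exact hne rfl

namespace SimpleGraph

variable {V : Type*} {G : SimpleGraph V} {u v : V}

theorem Walk.IsPath.girth_le_length_add_one {p : G.Walk u v} (hp : p.IsPath)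
    (hlen : 2 ≤ p.length) (h : G.Adj v u) : G.girth ≤ p.length + 1 := by
  have hcycle : (Walk.cons h p).IsCycle := by
    refine (Walk.cons_isCycle_iff p h).mpr ⟨hp, fun he => ?_⟩
    have := hp.length_eq_one_of_mem_edges (Sym2.eq_swap ▸ he)
    omega
  simpa using girth_le_length hcycle

theorem not_adj_of_adj_of_adj (hg : 3 < G.girth) {a b c : V} (hab : G.Adj a b)
    (hbc : G.Adj b c) : ¬ G.Adj c a := fun hca => by
  have hp : (Walk.cons hab (Walk.cons hbc Walk.nil)).IsPath := by
    simp [hab.ne, hbc.ne, hca.ne']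
  have := hp.girth_le_length_add_one (by simp) hca
  simp only [Walk.length_cons, Walk.length_nil] at this
  omega

theorem Walk.IsPath.not_hybrid_adj {p : G.Walk u v} (hp : p.IsPath) (hlen : 3 ≤ p.length)
    (hg : p.length + 2 < G.girth) : ¬ (hybrid G).Adj u v := by
  classical
  rintro ⟨-, huv | ⟨x, hux, hxv⟩⟩
  · have := hp.girth_le_length_add_one (by omega) huv.symm
    omega
  -- A common neighbour on the path cuts it into two pieces, one of length at least 2.
  by_cases hx : x ∈ p.support
  · have hsplit := congrArg Walk.length (p.take_spec hx)
    rw [Walk.length_append] at hsplit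
    by_cases htake : 2 ≤ (p.takeUntil x hx).length
    · have := (hp.takeUntil hx).girth_le_length_add_one htake hux.symm
      omega
    · have := (hp.dropUntil hx).girth_le_length_add_one (by omega) hxv.symm
      omega
  · have := (hp.concat hx hxv.symm).girth_le_length_add_one (by rw [Walk.length_concat]; omega)
      hux.symm
    rw [Walk.length_concat] at this
    omega

theorem two_le_degree_iff [Fintype V] [DecidableRel G.Adj] (huv : G.Adj u v) :
    2 ≤ G.degree u ↔ ∃ w, G.Adj u w ∧ w ≠ v := by
  rw [← card_neighborFinset_eq_degree, Nat.succ_le_iff]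
  refine ⟨fun h => by simpa using Finset.exists_mem_ne h v, fun ⟨w, huw, hwv⟩ => ?_⟩
  exact Finset.one_lt_card.mpr ⟨v, by simpa using huv, w, by simpa using huw, hwv.symm⟩

end SimpleGraph

section Hybrid

open SimpleGraph

variable {V : Type*} {G : SimpleGraph V} {i j k l x : V}

theorem hybrid_adj_iff_exists :
    (hybrid G).Adj x i ↔ x ≠ i ∧ ∃ n, (x = n ∨ G.Adj x n) ∧ G.Adj n i := by
  refine and_congr_right fun _ => ⟨?_, ?_⟩
  · rintro (h | ⟨n, hxn, hni⟩)
    exacts [⟨x, .inl rfl, h⟩, ⟨n, .inr hxn, hni⟩]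
  · rintro ⟨n, rfl | hxn, hni⟩
    exacts [.inl hni, .inr ⟨n, hxn, hni⟩]

theorem hybrid_adj_of_eq_or_adj (hkl : k ≠ l) (hk : k = x ∨ G.Adj k x)
    (hl : l = x ∨ G.Adj l x) : (hybrid G).Adj k l := by
  refine ⟨hkl, ?_⟩
  rcases hk with rfl | hk <;> rcases hl with rfl | hl
  exacts [absurd rfl hkl, .inl hl.symm, .inl hk, .inr ⟨x, hk, hl.symm⟩]

theorem eq_or_adj_of_hybrid_adj_of_hybrid_adj (hg : 6 < G.girth) {m : V} (him : G.Adj i m)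
    (hmj : G.Adj m j) (hij : i ≠ j) (hnij : ¬ G.Adj i j) (hxi : (hybrid G).Adj x i)
    (hxj : (hybrid G).Adj x j) : x = m ∨ G.Adj x m := by
  obtain ⟨-, n, hxn, hni⟩ := hybrid_adj_iff_exists.mp hxi
  obtain ⟨-, p, hxp, hpj⟩ := hybrid_adj_iff_exists.mp hxj
  by_cases hnm : n = m
  · exact hnm ▸ hxn
  by_cases hpm : p = m
  · exact hpm ▸ hxp
  exfalso
  have hnj : n ≠ j := by rintro rfl; exact hnij hni.symm
  have hip : i ≠ p := by rintro rfl; exact hnij hpj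
  by_cases hnp : n = p
  · subst hnp
    have hpath : (Walk.cons hni.symm (Walk.cons hpj (Walk.cons hmj.symm Walk.nil))).IsPath := by
      simp [hni.ne', hpj.ne, hmj.ne', hij, hnm, him.ne]
    have := hpath.girth_le_length_add_one (by simp) him.symm
    simp only [Walk.length_cons, Walk.length_nil] at this
    omega
  have hpath : (Walk.cons hni (Walk.cons him (Walk.cons hmj (Walk.cons hpj.symm
      Walk.nil)))).IsPath := by
    simp [hni.ne, him.ne, hmj.ne, hpj.ne', hnm, hnj, hnp, hij, hip, Ne.symm hpm]
  exact hpath.not_hybrid_adj (by simp) (by simpa using hg)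
    (hybrid_adj_of_eq_or_adj hnp (hxn.imp Eq.symm Adj.symm) (hxp.imp Eq.symm Adj.symm))

theorem adj_of_not_hybrid_adj_of_hybrid_adj (hg : 6 < G.girth) (hij : (hybrid G).Adj i j)
    (hkl : k ≠ l) (hki : (hybrid G).Adj k i) (hkj : (hybrid G).Adj k j)
    (hli : (hybrid G).Adj l i) (hlj : (hybrid G).Adj l j) (hnkl : ¬ (hybrid G).Adj k l) :
    G.Adj i j := by
  by_contra hnij
  obtain ⟨m, him, hmj⟩ := hij.2.resolve_left hnij
  exact hnkl <| hybrid_adj_of_eq_or_adj hkl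
    (eq_or_adj_of_hybrid_adj_of_hybrid_adj hg him hmj hij.1 hnij hki hkj)
    (eq_or_adj_of_hybrid_adj_of_hybrid_adj hg him hmj hij.1 hnij hli hlj)

theorem two_le_degree_of_not_hybrid_adj [Fintype V] [DecidableRel G.Adj] (hij : G.Adj i j)
    (hkl : k ≠ l) (hkj : k ≠ j) (hlj : l ≠ j) (hki : (hybrid G).Adj k i)
    (hli : (hybrid G).Adj l i) (hnkl : ¬ (hybrid G).Adj k l) : 2 ≤ G.degree i := by
  rw [two_le_degree_iff hij]
  by_contra! hi
  have hadj : ∀ x ≠ j, (hybrid G).Adj x i → G.Adj x j := fun x hxj hxi => by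
    obtain ⟨-, n, hxn, hni⟩ := hybrid_adj_iff_exists.mp hxi
    obtain rfl : n = j := hi n hni.symm
    exact hxn.resolve_left hxj
  exact hnkl <| hybrid_adj_of_eq_or_adj hkl (.inr (hadj k hkj hki)) (.inr (hadj l hlj hli))

theorem ne_and_not_hybrid_adj_of_adj (hg : 5 < G.girth) (hij : G.Adj i j) (hik : G.Adj i k)
    (hkj : k ≠ j) (hjl : G.Adj j l) (hli : l ≠ i) : k ≠ l ∧ ¬ (hybrid G).Adj k l := by
  have hkl : k ≠ l := by
    rintro rfl
    exact not_adj_of_adj_of_adj (by omega) hij hjl hik.symm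
  refine ⟨hkl, ?_⟩
  have hpath : (Walk.cons hik.symm (Walk.cons hij (Walk.cons hjl Walk.nil))).IsPath := by
    simp [hik.ne', hij.ne, hjl.ne, hkj, hkl, hli.symm]
  exact hpath.not_hybrid_adj (by simp) (by simpa using hg)

end Hybrid

/-- Theorem 2 of the paper: in a graph of girth greater than 6, an edge `(i,j)`
of the hybrid graph is a true edge between non-leaf nodes iff there exist `k, l` adjacent (in
the hybrid graph) to both `i` and `j` but not to each other. -/
theorem stmt3 {V : Type*} [Fintype V] (G : SimpleGraph V) [DecidableRel G.Adj]
    (hgirth : 6 < G.girth) (i j : V) (hij : (hybrid G).Adj i j) :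
    (∃ k l : V, k ≠ l ∧ k ≠ i ∧ k ≠ j ∧ l ≠ i ∧ l ≠ j ∧
        (hybrid G).Adj k i ∧ (hybrid G).Adj k j ∧
        (hybrid G).Adj l i ∧ (hybrid G).Adj l j ∧ ¬ (hybrid G).Adj k l) ↔
      (G.Adj i j ∧ 2 ≤ G.degree i ∧ 2 ≤ G.degree j) := by
  constructor
  · rintro ⟨k, l, hkl, hki, hkj, hli, hlj, hki', hkj', hli', hlj', hnkl⟩
    have hGij := adj_of_not_hybrid_adj_of_hybrid_adj hgirth hij hkl hki' hkj' hli' hlj' hnkl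
    exact ⟨hGij, two_le_degree_of_not_hybrid_adj hGij hkl hkj hlj hki' hli' hnkl,
      two_le_degree_of_not_hybrid_adj hGij.symm hkl hki hli hkj' hlj' hnkl⟩
  · rintro ⟨hGij, hi, hj⟩
    obtain ⟨k, hik, hkj⟩ := (G.two_le_degree_iff hGij).mp hi
    obtain ⟨l, hjl, hli⟩ := (G.two_le_degree_iff hGij.symm).mp hj
    obtain ⟨hkl, hnkl⟩ := ne_and_not_hybrid_adj_of_adj (by omega) hGij hik hkj hjl hli
    exact ⟨k, l, hkl, hik.ne', hkj, hli, hjl.ne', ⟨hik.ne', .inl hik.symm⟩,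
      ⟨hkj, .inr ⟨i, hik.symm, hGij⟩⟩, ⟨hli, .inr ⟨j, hjl.symm, hGij.symm⟩⟩,
      ⟨hjl.ne', .inl hjl.symm⟩, hnkl⟩
end

section
/- Let G be a finite connected simple graph with minimum cycle length greater than 6 (no cycle of length at most 6) and with at least 3 vertices of degree at least 2. Let H be the hybrid graph of G: distinct vertices are adjacent in H iff they are adjacent in G or have a common neighbor in G. Let i be a vertex of degree at least 2 in G and j a vertex of degree exactly 1 in G, and suppose i and j are adjacent in H. Then i and j are adjacent in G if and only if the set {k : k ≠ j, k adjacent to i in G, deg_G(k) ≥ 2} equals the set {k : k ≠ i, k adjacent to j in H, deg_G(k) ≥ 2}. -/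
namespace SimpleGraph

variable {V : Type*} {G : SimpleGraph V}

lemma not_adj_of_three_lt_girth (hG : 3 < G.girth) {a b c : V} (hab : G.Adj a b)
    (hbc : G.Adj b c) : ¬ G.Adj c a := by
  intro hca
  have hcycle : (Walk.cons hab (Walk.cons hbc (Walk.cons hca Walk.nil))).IsCycle := by
    simp [Walk.isCycle_def, Walk.isTrail_def, hab.ne, hbc.ne, hca.ne, hab.ne', hca.ne']
  have := girth_le_length hcycle
  simp only [Walk.length_cons, Walk.length_nil] at this
  omega

lemma hybrid_adj_iff_of_forall_adj_iff {j p : V} (hp : ∀ k, G.Adj j k ↔ k = p) (k : V) :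
    (hybrid G).Adj j k ↔ k ≠ j ∧ (k = p ∨ G.Adj p k) := by
  simp only [hybrid, hp, exists_eq_left, ne_comm]

section LocallyFinite

variable [G.LocallyFinite]

lemma eq_of_adj_of_adj_of_degree_le_one {v x y : V} (hv : G.degree v ≤ 1) (hx : G.Adj v x)
    (hy : G.Adj v y) : x = y :=
  Finset.card_le_one.mp hv x (G.mem_neighborFinset v x |>.mpr hx) y
    (G.mem_neighborFinset v y |>.mpr hy)

lemma eq_or_eq_of_reachable_of_two_le_degree {a b w : V}
    (ha : ∀ k, G.Adj a k → 2 ≤ G.degree k → k = b)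
    (hb : ∀ k, G.Adj b k → 2 ≤ G.degree k → k = a)
    (hw : G.Reachable a w) (hdw : 2 ≤ G.degree w) : w = a ∨ w = b := by
  let P : V → Prop := fun v =>
    v = a ∨ v = b ∨ (G.degree v ≤ 1 ∧ ∀ u, G.Adj v u → u = a ∨ u = b)
  have hstep : ∀ v u, P v → G.Adj v u → P u := by
    rintro v u (rfl | rfl | ⟨-, hv⟩) hvu
    · by_cases hdu : 2 ≤ G.degree u
      · exact Or.inr (Or.inl (ha u hvu hdu))
      · exact Or.inr (Or.inr ⟨by omega, fun x hux =>
          Or.inl (eq_of_adj_of_adj_of_degree_le_one (by omega) hux hvu.symm)⟩)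
    · by_cases hdu : 2 ≤ G.degree u
      · exact Or.inl (hb u hvu hdu)
      · exact Or.inr (Or.inr ⟨by omega, fun x hux =>
          Or.inr (eq_of_adj_of_adj_of_degree_le_one (by omega) hux hvu.symm)⟩)
    · exact (hv u hvu).imp id Or.inl
  have hP : ∀ v, Relation.ReflTransGen G.Adj a v → P v := by
    intro v hv
    induction hv with
    | refl => exact Or.inl rfl
    | tail _ hvu ih => exact hstep _ _ ih hvu
  rcases hP w ((reachable_iff_reflTransGen a w).mp hw) with h | h | ⟨h, -⟩
  · exact Or.inl h
  · exact Or.inr h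
  · omega

end LocallyFinite

lemma card_filter_two_le_degree_le_two [Fintype V] [DecidableRel G.Adj] (hG : G.Preconnected)
    {a b : V} (ha : ∀ k, G.Adj a k → 2 ≤ G.degree k → k = b)
    (hb : ∀ k, G.Adj b k → 2 ≤ G.degree k → k = a) :
    (Finset.univ.filter fun v => 2 ≤ G.degree v).card ≤ 2 := by
  classical
  calc _ ≤ ({a, b} : Finset V).card := Finset.card_le_card fun w hw => by
        simpa using eq_or_eq_of_reachable_of_two_le_degree ha hb (hG a w)
          (Finset.mem_filter.mp hw).2
    _ ≤ 2 := Finset.card_le_two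

end SimpleGraph

open SimpleGraph

theorem stmt4_general {V : Type*} [Fintype V] (G : SimpleGraph V)
    [DecidableRel G.Adj]
    (hconn : G.Connected) (hgirth : 6 < G.girth)
    (h3 : 3 ≤ (Finset.univ.filter fun v => 2 ≤ G.degree v).card)
    (i j : V) (hj : G.degree j = 1)
    (hij : (hybrid G).Adj i j) :
    G.Adj i j ↔
      {k : V | k ≠ j ∧ G.Adj i k ∧ 2 ≤ G.degree k} =
        {k : V | k ≠ i ∧ (hybrid G).Adj j k ∧ 2 ≤ G.degree k} := by
  obtain ⟨p, hjp, hp_unique⟩ := degree_eq_one_iff_existsUnique_adj.mp hj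
  have hp : ∀ k, G.Adj j k ↔ k = p := fun k => ⟨hp_unique k, fun h => h ▸ hjp⟩
  have hjk := hybrid_adj_iff_of_forall_adj_iff hp
  have hne_j : ∀ k, 2 ≤ G.degree k → k ≠ j := by rintro k hk rfl; omega
  have hnotri : ∀ {a b c}, G.Adj a b → G.Adj b c → ¬ G.Adj c a :=
    not_adj_of_three_lt_girth (by omega)
  constructor
  · intro hadj
    obtain rfl : i = p := (hp i).mp hadj.symm
    ext k
    simp only [Set.mem_ofPred_eq, hjk]
    exact ⟨fun ⟨hkj, hik, hk⟩ => ⟨hik.ne', ⟨hkj, Or.inr hik⟩, hk⟩,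
      fun ⟨hki, ⟨hkj, hik⟩, hk⟩ => ⟨hkj, hik.resolve_left hki, hk⟩⟩
  · intro hset
    by_contra hnadj
    have hip : G.Adj i p := by
      obtain ⟨-, rfl | hpi⟩ := (hjk i).mp hij.symm
      · exact absurd hjp.symm hnadj
      · exact hpi.symm
    have hi_p : ∀ k, G.Adj i k → 2 ≤ G.degree k → k = p := fun k hik hk => by
      have hkR : k ∈ {k : V | k ≠ i ∧ (hybrid G).Adj j k ∧ 2 ≤ G.degree k} :=
        hset ▸ ⟨hne_j k hk, hik, hk⟩
      exact ((hjk k).mp hkR.2.1).2.resolve_right fun hpk => hnotri hik hpk.symm hip.symm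
    have hp_i : ∀ k, G.Adj p k → 2 ≤ G.degree k → k = i := fun k hpk hk => by
      by_contra hki
      have hkL : k ∈ {k : V | k ≠ j ∧ G.Adj i k ∧ 2 ≤ G.degree k} :=
        hset ▸ ⟨hki, (hjk k).mpr ⟨hne_j k hk, Or.inr hpk⟩, hk⟩
      exact hnotri hkL.2.1 hpk.symm hip.symm
    have := card_filter_two_le_degree_le_two hconn.preconnected hi_p hp_i
    omega

/-- Theorem 3 of the paper: identifying the true parent of a leaf node.
`G` is connected, has girth greater than 6 and at least 3 non-leaf nodes; `i` is a non-leaf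
node, `j` a leaf node, and `(i,j)` an edge of the hybrid graph. Then `(i,j)` is a true edge
of `G` iff the non-leaf neighbors of `i` in `G` coincide with the non-leaf neighbors of `j`
in the hybrid graph. -/
theorem stmt4 {V : Type*} [Fintype V] [DecidableEq V] (G : SimpleGraph V)
    [DecidableRel G.Adj]
    (hconn : G.Connected) (hgirth : 6 < G.girth)
    (h3 : 3 ≤ (Finset.univ.filter fun v => 2 ≤ G.degree v).card)
    (i j : V) (hi : 2 ≤ G.degree i) (hj : G.degree j = 1)
    (hij : (hybrid G).Adj i j) :
    G.Adj i j ↔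
      {k : V | k ≠ j ∧ G.Adj i k ∧ 2 ≤ G.degree k} =
        {k : V | k ≠ i ∧ (hybrid G).Adj j k ∧ 2 ≤ G.degree k} :=
  stmt4_general G hconn hgirth h3 i j hj hij
end

section
/- Let N be a positive integer, a ≠ b two indices in {1,…,N}, and let g, g′, β, β′ : {1,…,N}² → ℝ be symmetric nonnegative functions vanishing on the diagonal such that g′(i,j) = g(i,j) and β′(i,j) = β(i,j) for every pair {i,j} ≠ {a,b}, while g(a,b) = β(a,b) = 0 and g′(a,b) > 0, β′(a,b) > 0 (i.e., the primed weights are obtained by adding the single line (a,b)). Let c_i ≥ 0, s_i ≥ 0 be nonnegative reals and define H_g by H_g(i,j) = −g(i,j) for i ≠ j and H_g(i,i) = c_i + Σ_k g(i,k), and similarly H_β from β and s, and H_g′, H_β′ from g′, β′ with the same c, s. Let D be an N×N diagonal matrix with strictly positive diagonal entries, and set M := H_g D H_g + H_β D H_β and M′ := H_g′ D H_g′ + H_β′ D H_β′. Then M′(i,i) − M(i,i) > 0 for i ∈ {a,b}, and M′(i,i) − M(i,i) = 0 for every i ∉ {a,b}. (Equivalently, if the line (a,b) is removed, the diagonal change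 M(i,i) − M′(i,i) is negative at i ∈ {a,b} and zero elsewhere.) -/
open Matrix Finset

lemma stmt7_expand {N : ℕ} (d : Fin N → ℝ) (K : Matrix (Fin N) (Fin N) ℝ) (i : Fin N) :
    (K * Matrix.diagonal d * K) i i = ∑ j, K i j * d j * K j i := by
  rw [Matrix.mul_apply]
  exact Finset.sum_congr rfl fun j _ => by rw [Matrix.mul_diagonal]

lemma stmt7_aux_pos {N : ℕ} (a b : Fin N) (hab : a ≠ b)
    (g g' : Fin N → Fin N → ℝ)
    (hgsymm : ∀ i j, g i j = g j i) (hg'symm : ∀ i j, g' i j = g' j i)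
    (hgnn : ∀ i j, 0 ≤ g i j) (hg'nn : ∀ i j, 0 ≤ g' i j)
    (hsame : ∀ i j, ¬ ((i = a ∧ j = b) ∨ (i = b ∧ j = a)) → g' i j = g i j)
    (hgab : g a b = 0) (hg'ab : 0 < g' a b)
    (c : Fin N → ℝ) (hc : ∀ i, 0 ≤ c i)
    (H H' : Matrix (Fin N) (Fin N) ℝ)
    (hH : ∀ i j, H i j = if i = j then c i + ∑ k, g i k else -g i j)
    (hH' : ∀ i j, H' i j = if i = j then c i + ∑ k, g' i k else -g' i j)
    (d : Fin N → ℝ) (hd : ∀ i, 0 < d i) :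
    (H * Matrix.diagonal d * H) a a < (H' * Matrix.diagonal d * H') a a := by
  rw [stmt7_expand, stmt7_expand]
  apply Finset.sum_lt_sum
  · intro j _
    have hdj := (hd j).le
    by_cases hja : j = a
    · subst hja
      have h1 : 0 ≤ H j j := by
        rw [hH, if_pos rfl]
        have : 0 ≤ ∑ k, g j k := Finset.sum_nonneg fun k _ => hgnn j k
        linarith [hc j]
      have h2 : H j j ≤ H' j j := by
        rw [hH, hH', if_pos rfl, if_pos rfl]
        have : ∑ k, g j k ≤ ∑ k, g' j k := by
          apply Finset.sum_le_sum
          intro k _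
          by_cases hkb : k = b
          · rw [hkb, hgab]; exact hg'nn j b
          · rw [hsame j k (by simp [hkb, hab])]
        linarith
      have h3 := mul_le_mul h2 h2 h1 (h1.trans h2)
      nlinarith [mul_le_mul_of_nonneg_right h3 hdj]
    · by_cases hjb : j = b
      · have h1 : H a j * d j * H j a = 0 := by
          rw [hH a j, hH j a, if_neg (Ne.symm hja), if_neg hja, hgsymm j a,
            hjb, hgab]
          ring
        have h2 : 0 ≤ H' a j * d j * H' j a := by
          rw [hH' a j, hH' j a, if_neg (Ne.symm hja), if_neg hja, hg'symm j a]
          have heq : -g' a j * d j * -g' a j = (g' a j * g' a j) * d j := by ring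
          rw [heq]
          exact mul_nonneg (mul_nonneg (hg'nn a j) (hg'nn a j)) hdj
        linarith
      · have e1 : g' a j = g a j := hsame a j (by simp [hjb, hab])
        have e2 : g' j a = g j a := hsame j a (by simp [hja, hjb])
        rw [hH a j, hH j a, hH' a j, hH' j a, if_neg (Ne.symm hja),
          if_neg hja, if_neg (Ne.symm hja), if_neg hja, e1, e2]
  · refine ⟨b, Finset.mem_univ b, ?_⟩
    have hba : b ≠ a := hab.symm
    have h1 : H a b * d b * H b a = 0 := by
      rw [hH a b, hH b a, if_neg hab, if_neg hba, hgsymm b a, hgab]; ring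
    have h2 : 0 < H' a b * d b * H' b a := by
      rw [hH' a b, hH' b a, if_neg hab, if_neg hba, hg'symm b a]
      have heq : -g' a b * d b * -g' a b = (g' a b * g' a b) * d b := by ring
      rw [heq]
      exact mul_pos (mul_pos hg'ab hg'ab) (hd b)
    linarith

lemma stmt7_aux_eq {N : ℕ} (a b : Fin N)
    (g g' : Fin N → Fin N → ℝ)
    (hsame : ∀ i j, ¬ ((i = a ∧ j = b) ∨ (i = b ∧ j = a)) → g' i j = g i j)
    (c : Fin N → ℝ)
    (H H' : Matrix (Fin N) (Fin N) ℝ)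
    (hH : ∀ i j, H i j = if i = j then c i + ∑ k, g i k else -g i j)
    (hH' : ∀ i j, H' i j = if i = j then c i + ∑ k, g' i k else -g' i j)
    (d : Fin N → ℝ)
    (i : Fin N) (hia : i ≠ a) (hib : i ≠ b) :
    (H' * Matrix.diagonal d * H') i i = (H * Matrix.diagonal d * H) i i := by
  have rowEq : ∀ j, g' i j = g i j := fun j => hsame i j (by simp [hia, hib])
  have colEq : ∀ j, g' j i = g j i := fun j => hsame j i (by simp [hia, hib])
  have e1 : ∀ j, H' i j = H i j := by
    intro j
    rw [hH, hH']
    by_cases h : i = j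
    · simp only [if_pos h, rowEq]
    · simp only [if_neg h, rowEq]
  have e2 : ∀ j, H' j i = H j i := by
    intro j
    rw [hH, hH']
    by_cases h : j = i
    · simp only [if_pos h, h, rowEq]
    · simp only [if_neg h, colEq]
  rw [stmt7_expand, stmt7_expand]
  exact Finset.sum_congr rfl fun j _ => by rw [e1, e2]


/-- Theorem 5 of the paper, topology change detection: adding a single line
`(a,b)` strictly increases the diagonal entries of `H_g D H_g + H_β D H_β` at `a` and `b`,
and leaves all other diagonal entries unchanged. -/
theorem stmt7 (N : ℕ) (hN : 0 < N) (a b : Fin N) (hab : a ≠ b)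
    (g g' β β' : Fin N → Fin N → ℝ)
    (hgsymm : ∀ i j, g i j = g j i) (hg'symm : ∀ i j, g' i j = g' j i)
    (hβsymm : ∀ i j, β i j = β j i) (hβ'symm : ∀ i j, β' i j = β' j i)
    (hgnn : ∀ i j, 0 ≤ g i j) (hg'nn : ∀ i j, 0 ≤ g' i j)
    (hβnn : ∀ i j, 0 ≤ β i j) (hβ'nn : ∀ i j, 0 ≤ β' i j)
    (hgdiag : ∀ i, g i i = 0) (hg'diag : ∀ i, g' i i = 0)
    (hβdiag : ∀ i, β i i = 0) (hβ'diag : ∀ i, β' i i = 0)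
    (hsame : ∀ i j, ¬ ((i = a ∧ j = b) ∨ (i = b ∧ j = a)) →
      g' i j = g i j ∧ β' i j = β i j)
    (hgab : g a b = 0) (hβab : β a b = 0)
    (hg'ab : 0 < g' a b) (hβ'ab : 0 < β' a b)
    (c s : Fin N → ℝ) (hc : ∀ i, 0 ≤ c i) (hs : ∀ i, 0 ≤ s i)
    (Hg Hβ Hg' Hβ' : Matrix (Fin N) (Fin N) ℝ)
    (hHg : ∀ i j, Hg i j = if i = j then c i + ∑ k, g i k else -g i j)
    (hHβ : ∀ i j, Hβ i j = if i = j then s i + ∑ k, β i k else -β i j)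
    (hHg' : ∀ i j, Hg' i j = if i = j then c i + ∑ k, g' i k else -g' i j)
    (hHβ' : ∀ i j, Hβ' i j = if i = j then s i + ∑ k, β' i k else -β' i j)
    (d : Fin N → ℝ) (hd : ∀ i, 0 < d i)
    (D : Matrix (Fin N) (Fin N) ℝ) (hD : D = Matrix.diagonal d)
    (M M' : Matrix (Fin N) (Fin N) ℝ)
    (hM : M = Hg * D * Hg + Hβ * D * Hβ)
    (hM' : M' = Hg' * D * Hg' + Hβ' * D * Hβ') :
    (0 < M' a a - M a a) ∧ (0 < M' b b - M b b) ∧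
      ∀ i, i ≠ a → i ≠ b → M' i i - M i i = 0 := by
  subst hD hM hM'
  have hsg : ∀ i j, ¬ ((i = a ∧ j = b) ∨ (i = b ∧ j = a)) → g' i j = g i j :=
    fun i j h => (hsame i j h).1
  have hsβ : ∀ i j, ¬ ((i = a ∧ j = b) ∨ (i = b ∧ j = a)) → β' i j = β i j :=
    fun i j h => (hsame i j h).2
  have hsg2 : ∀ i j, ¬ ((i = b ∧ j = a) ∨ (i = a ∧ j = b)) → g' i j = g i j :=
    fun i j h => hsg i j (fun h' => h h'.symm)
  have hsβ2 : ∀ i j, ¬ ((i = b ∧ j = a) ∨ (i = a ∧ j = b)) → β' i j = β i j :=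
    fun i j h => hsβ i j (fun h' => h h'.symm)
  refine ⟨?_, ?_, ?_⟩
  · have h1 := stmt7_aux_pos a b hab g g' hgsymm hg'symm hgnn hg'nn hsg hgab hg'ab
      c hc Hg Hg' hHg hHg' d hd
    have h2 := stmt7_aux_pos a b hab β β' hβsymm hβ'symm hβnn hβ'nn hsβ hβab hβ'ab
      s hs Hβ Hβ' hHβ hHβ' d hd
    simp only [Matrix.add_apply]
    linarith
  · have h1 := stmt7_aux_pos b a hab.symm g g' hgsymm hg'symm hgnn hg'nn hsg2
      (by rw [hgsymm b a]; exact hgab) (by rw [hg'symm b a]; exact hg'ab)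
      c hc Hg Hg' hHg hHg' d hd
    have h2 := stmt7_aux_pos b a hab.symm β β' hβsymm hβ'symm hβnn hβ'nn hsβ2
      (by rw [hβsymm b a]; exact hβab) (by rw [hβ'symm b a]; exact hβ'ab)
      s hs Hβ Hβ' hHβ hHβ' d hd
    simp only [Matrix.add_apply]
    linarith
  · intro i hia hib
    have h1 := stmt7_aux_eq a b g g' hsg c Hg Hg' hHg hHg' d i hia hib
    have h2 := stmt7_aux_eq a b β β' hsβ s Hβ Hβ' hHβ hHβ' d i hia hib
    simp only [Matrix.add_apply]
    linarith
end

section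
/- Let H be an n×n real symmetric invertible matrix, Σ_p and Σ_n n×n real symmetric positive definite matrices, Σ_v := H⁻¹ Σ_p H⁻¹, and Δ := (Σ_v + Σ_n)⁻¹ − Σ_v⁻¹. Then for all indices i, j: |Δ(i,j)| ≤ λmax(Σ_n) · (λmax(H²))² / (λmin(Σ_p))², where λmax(A) and λmin(A) denote the largest and smallest eigenvalues of a real symmetric matrix A. -/
open Matrix

/-- The largest eigenvalue of a real symmetric (Hermitian) matrix. -/
noncomputable def maxEig {n : Type*} [Fintype n] [DecidableEq n]
    {A : Matrix n n ℝ} (hA : A.IsHermitian) : ℝ := ⨆ k, hA.eigenvalues k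

/-- The smallest eigenvalue of a real symmetric (Hermitian) matrix. -/
noncomputable def minEig {n : Type*} [Fintype n] [DecidableEq n]
    {A : Matrix n n ℝ} (hA : A.IsHermitian) : ℝ := ⨅ k, hA.eigenvalues k

/-!
Since `Δ = -(Σ_v + Σ_n)⁻¹ Σ_n Σ_v⁻¹`, the entry `Δ i j` is the `Σ_n`-form evaluated on row `i`
of `(Σ_v + Σ_n)⁻¹` and column `j` of `Σ_v⁻¹`; Cauchy–Schwarz for this form bounds it by
`λmax(Σ_n)` times the lengths of the two vectors. Both `Σ_v` and `Σ_v + Σ_n` dominate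
`c = λmin(Σ_p) / λmax(H²)` times the identity as quadratic forms, and if `c ‖x‖² ≤ xᵀ M x` then
the rows and columns of `M⁻¹` have length at most `1 / c`.
-/

namespace Matrix

variable {ι : Type*} [Fintype ι]

theorem sq_dotProduct_le_dotProduct_self_mul (v w : ι → ℝ) :
    (v ⬝ᵥ w) ^ 2 ≤ (v ⬝ᵥ v) * (w ⬝ᵥ w) := by
  simpa only [dotProduct, pow_two] using Finset.sum_mul_sq_le_sq_mul_sq Finset.univ v w

theorem sq_mul_dotProduct_self_le_of_le_dotProduct {c : ℝ} (hc : 0 ≤ c) {v w : ι → ℝ}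
    (h : c * (v ⬝ᵥ v) ≤ v ⬝ᵥ w) : c ^ 2 * (v ⬝ᵥ v) ≤ w ⬝ᵥ w := by
  have hv : 0 ≤ v ⬝ᵥ v := dotProduct_self_star_nonneg v
  have hw : 0 ≤ w ⬝ᵥ w := dotProduct_self_star_nonneg w
  have hsq : (c * (v ⬝ᵥ v)) ^ 2 ≤ (v ⬝ᵥ v) * (w ⬝ᵥ w) :=
    (pow_le_pow_left₀ (by positivity) h 2).trans (sq_dotProduct_le_dotProduct_self_mul v w)
  rcases hv.eq_or_lt with hv0 | hvpos
  · simpa [← hv0] using hw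
  · exact le_of_mul_le_mul_left (by nlinarith) hvpos

theorem IsHermitian.dotProduct_mulVec_comm {A : Matrix ι ι ℝ} (hA : A.IsHermitian)
    (x y : ι → ℝ) : x ⬝ᵥ (A *ᵥ y) = (A *ᵥ x) ⬝ᵥ y := by
  rw [dotProduct_mulVec, ← mulVec_transpose, ← conjTranspose_eq_transpose_of_trivial, hA.eq]

theorem PosSemidef.sq_dotProduct_mulVec_le {M : Matrix ι ι ℝ} (hM : M.PosSemidef)
    (x y : ι → ℝ) :
    (x ⬝ᵥ (M *ᵥ y)) ^ 2 ≤ (x ⬝ᵥ (M *ᵥ x)) * (y ⬝ᵥ (M *ᵥ y)) := by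
  let := M.toSeminormedAddCommGroup hM
  let := M.toInnerProductSpace hM
  have cauchySchwarz := real_inner_mul_inner_self_le x y
  change (M *ᵥ y ⬝ᵥ star x) * (M *ᵥ y ⬝ᵥ star x) ≤ (M *ᵥ x ⬝ᵥ star x) * (M *ᵥ y ⬝ᵥ star y)
    at cauchySchwarz
  simpa only [star_trivial, dotProduct_comm _ x, dotProduct_comm _ y, pow_two] using cauchySchwarz

theorem sq_mul_dotProduct_self_le_mulVec {M : Matrix ι ι ℝ} {c : ℝ}
    (hM : ∀ x, c * (x ⬝ᵥ x) ≤ x ⬝ᵥ (M *ᵥ x)) (hc : 0 ≤ c) (v : ι → ℝ) :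
    c ^ 2 * (v ⬝ᵥ v) ≤ (M *ᵥ v) ⬝ᵥ (M *ᵥ v) :=
  sq_mul_dotProduct_self_le_of_le_dotProduct hc (hM v)

theorem sq_mul_dotProduct_self_le_vecMul {M : Matrix ι ι ℝ} {c : ℝ}
    (hM : ∀ x, c * (x ⬝ᵥ x) ≤ x ⬝ᵥ (M *ᵥ x)) (hc : 0 ≤ c) (v : ι → ℝ) :
    c ^ 2 * (v ⬝ᵥ v) ≤ (v ᵥ* M) ⬝ᵥ (v ᵥ* M) :=
  sq_mul_dotProduct_self_le_of_le_dotProduct hc <| by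
    simpa only [dotProduct_mulVec, dotProduct_comm _ v] using hM v

theorem isUnit_of_coercive [DecidableEq ι] {M : Matrix ι ι ℝ} {c : ℝ}
    (hM : ∀ x, c * (x ⬝ᵥ x) ≤ x ⬝ᵥ (M *ᵥ x)) (hc : 0 < c) : IsUnit M := by
  refine mulVec_injective_iff_isUnit.mp fun a b hab => sub_eq_zero.mp ?_
  have h := sq_mul_dotProduct_self_le_mulVec hM hc.le (a - b)
  rw [mulVec_sub, hab, sub_self, zero_dotProduct] at h
  exact dotProduct_self_eq_zero.mp <|
    le_antisymm (nonpos_of_mul_nonpos_right h (by positivity)) (dotProduct_self_star_nonneg _)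

variable [DecidableEq ι]

open scoped MatrixOrder in
theorem IsHermitian.minEig_mul_dotProduct_self_le {A : Matrix ι ι ℝ} (hA : A.IsHermitian)
    (x : ι → ℝ) : minEig hA * (x ⬝ᵥ x) ≤ x ⬝ᵥ (A *ᵥ x) := by
  have hle : algebraMap ℝ (Matrix ι ι ℝ) (minEig hA) ≤ A := by
    refine algebraMap_le_of_le_spectrum (fun r hr => ?_) hA
    obtain ⟨k, rfl⟩ := hA.spectrum_real_eq_range_eigenvalues ▸ hr
    exact ciInf_le (Set.finite_range _).bddBelow k
  simpa [Algebra.algebraMap_eq_smul_one, sub_mulVec, dotProduct_sub, smul_mulVec]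
    using (le_iff.mp hle).dotProduct_mulVec_nonneg x

open scoped MatrixOrder in
theorem IsHermitian.dotProduct_mulVec_le_maxEig_mul {A : Matrix ι ι ℝ} (hA : A.IsHermitian)
    (x : ι → ℝ) : x ⬝ᵥ (A *ᵥ x) ≤ maxEig hA * (x ⬝ᵥ x) := by
  have hle : A ≤ algebraMap ℝ (Matrix ι ι ℝ) (maxEig hA) := by
    refine le_algebraMap_of_spectrum_le (fun r hr => ?_) hA
    obtain ⟨k, rfl⟩ := hA.spectrum_real_eq_range_eigenvalues ▸ hr
    exact le_ciSup (Set.finite_range _).bddAbove k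
  simpa [Algebra.algebraMap_eq_smul_one, sub_mulVec, dotProduct_sub, smul_mulVec]
    using (le_iff.mp hle).dotProduct_mulVec_nonneg x

theorem PosSemidef.minEig_nonneg {A : Matrix ι ι ℝ} (hA : A.PosSemidef) : 0 ≤ minEig hA.1 :=
  Real.iInf_nonneg hA.eigenvalues_nonneg

theorem PosSemidef.maxEig_nonneg {A : Matrix ι ι ℝ} (hA : A.PosSemidef) : 0 ≤ maxEig hA.1 :=
  Real.iSup_nonneg hA.eigenvalues_nonneg

theorem PosDef.minEig_pos [Nonempty ι] {A : Matrix ι ι ℝ} (hA : A.PosDef) :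
    0 < minEig hA.1 := by
  obtain ⟨k, hk⟩ := exists_eq_ciInf_of_finite (f := hA.1.eigenvalues)
  rw [minEig, ← hk]
  exact hA.eigenvalues_pos k

theorem PosDef.maxEig_pos [Nonempty ι] {A : Matrix ι ι ℝ} (hA : A.PosDef) : 0 < maxEig hA.1 :=
  (hA.eigenvalues_pos (Classical.arbitrary ι)).trans_le <|
    le_ciSup (Set.finite_range _).bddAbove _

theorem PosSemidef.sq_dotProduct_mulVec_le_maxEig {M : Matrix ι ι ℝ} (hM : M.PosSemidef)
    (x y : ι → ℝ) :
    (x ⬝ᵥ (M *ᵥ y)) ^ 2 ≤ maxEig hM.1 ^ 2 * (x ⬝ᵥ x) * (y ⬝ᵥ y) := by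
  have hx := hM.1.dotProduct_mulVec_le_maxEig_mul x
  have hy := hM.1.dotProduct_mulVec_le_maxEig_mul y
  have hx0 : 0 ≤ x ⬝ᵥ (M *ᵥ x) := by simpa using hM.dotProduct_mulVec_nonneg x
  have hy0 : 0 ≤ y ⬝ᵥ (M *ᵥ y) := by simpa using hM.dotProduct_mulVec_nonneg y
  calc (x ⬝ᵥ (M *ᵥ y)) ^ 2 ≤ (x ⬝ᵥ (M *ᵥ x)) * (y ⬝ᵥ (M *ᵥ y)) :=
        hM.sq_dotProduct_mulVec_le x y
    _ ≤ (maxEig hM.1 * (x ⬝ᵥ x)) * (maxEig hM.1 * (y ⬝ᵥ y)) :=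
      mul_le_mul hx hy hy0 (hx0.trans hx)
    _ = maxEig hM.1 ^ 2 * (x ⬝ᵥ x) * (y ⬝ᵥ y) := by ring

theorem abs_inv_add_sub_inv_apply_le {B E : Matrix ι ι ℝ} {c : ℝ} (hc : 0 < c)
    (hB : ∀ x, c * (x ⬝ᵥ x) ≤ x ⬝ᵥ (B *ᵥ x)) (hE : E.PosSemidef) (i j : ι) :
    |((B + E)⁻¹ - B⁻¹) i j| ≤ maxEig hE.1 / c ^ 2 := by
  have hBE (x : ι → ℝ) : c * (x ⬝ᵥ x) ≤ x ⬝ᵥ ((B + E) *ᵥ x) := by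
    have hEx : 0 ≤ x ⬝ᵥ (E *ᵥ x) := by simpa using hE.dotProduct_mulVec_nonneg x
    rw [add_mulVec, dotProduct_add]
    linarith [hB x]
  have hBu := isUnit_of_coercive hB hc
  have hBEu := isUnit_of_coercive hBE hc
  set u := Pi.single i 1 ᵥ* (B + E)⁻¹
  set w := B⁻¹ *ᵥ Pi.single j 1
  have hentry : ((B + E)⁻¹ - B⁻¹) i j = -(u ⬝ᵥ (E *ᵥ w)) := by
    rw [inv_sub_inv (iff_of_true hBEu hBu), sub_add_cancel_left, Matrix.mul_neg,
      Matrix.neg_mul, neg_apply, dotProduct_mulVec, dotProduct_mulVec, vecMul_vecMul,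
      vecMul_vecMul, single_one_vecMul, dotProduct_single, mul_one, row_apply, Matrix.mul_assoc]
  have hu : u ⬝ᵥ u ≤ 1 / c ^ 2 := by
    have := sq_mul_dotProduct_self_le_vecMul hBE hc.le u
    rw [vecMul_vecMul, nonsing_inv_mul _ ((isUnit_iff_isUnit_det _).mp hBEu), vecMul_one,
      single_dotProduct, one_mul, Pi.single_eq_same] at this
    rwa [le_div_iff₀ (by positivity), mul_comm]
  have hw : w ⬝ᵥ w ≤ 1 / c ^ 2 := by
    have := sq_mul_dotProduct_self_le_mulVec hB hc.le w
    rw [mulVec_mulVec, mul_nonsing_inv _ ((isUnit_iff_isUnit_det _).mp hBu), one_mulVec,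
      single_dotProduct, one_mul, Pi.single_eq_same] at this
    rwa [le_div_iff₀ (by positivity), mul_comm]
  rw [hentry, abs_neg]
  refine abs_le_of_sq_le_sq ?_ (div_nonneg hE.maxEig_nonneg (by positivity))
  calc (u ⬝ᵥ (E *ᵥ w)) ^ 2 ≤ maxEig hE.1 ^ 2 * (u ⬝ᵥ u) * (w ⬝ᵥ w) :=
        hE.sq_dotProduct_mulVec_le_maxEig u w
    _ ≤ maxEig hE.1 ^ 2 * (1 / c ^ 2) * (1 / c ^ 2) := by
        gcongr
        exact dotProduct_self_star_nonneg _
    _ = (maxEig hE.1 / c ^ 2) ^ 2 := by ring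

theorem IsHermitian.minEig_div_maxEig_sq_mul_le_inv_mul_mul_inv {H P : Matrix ι ι ℝ}
    (hH : H.IsHermitian) (hHu : IsUnit H) (hP : P.PosSemidef) (hH2 : 0 < maxEig (hH.pow 2)) (x : ι → ℝ) :
    minEig hP.1 / maxEig (hH.pow 2) * (x ⬝ᵥ x) ≤ x ⬝ᵥ ((H⁻¹ * P * H⁻¹) *ᵥ x) := by
  set y := H⁻¹ *ᵥ x
  have hx : x = H *ᵥ y := by
    rw [mulVec_mulVec, mul_nonsing_inv _ ((isUnit_iff_isUnit_det _).mp hHu), one_mulVec]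
  have hquad : x ⬝ᵥ ((H⁻¹ * P * H⁻¹) *ᵥ x) = y ⬝ᵥ (P *ᵥ y) := by
    rw [← mulVec_mulVec, ← mulVec_mulVec, hH.inv.dotProduct_mulVec_comm]
  have hnorm : x ⬝ᵥ x ≤ maxEig (hH.pow 2) * (y ⬝ᵥ y) := by
    calc x ⬝ᵥ x = y ⬝ᵥ ((H ^ 2) *ᵥ y) := by
          rw [hx, sq, ← mulVec_mulVec, hH.dotProduct_mulVec_comm, dotProduct_comm]
      _ ≤ _ := (hH.pow 2).dotProduct_mulVec_le_maxEig_mul y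
  calc minEig hP.1 / maxEig (hH.pow 2) * (x ⬝ᵥ x)
      ≤ minEig hP.1 / maxEig (hH.pow 2) * (maxEig (hH.pow 2) * (y ⬝ᵥ y)) := by
        gcongr
        exact div_nonneg hP.minEig_nonneg hH2.le
    _ = minEig hP.1 * (y ⬝ᵥ y) := by field_simp
    _ ≤ y ⬝ᵥ (P *ᵥ y) := hP.1.minEig_mul_dotProduct_self_le y
    _ = _ := hquad.symm

end Matrix

/-- Lemma 3 of the paper: the entrywise deviation of the inverse voltage
covariance due to measurement noise is bounded by
`λmax(Σ_n) · (λmax(H²))² / (λmin(Σ_p))²`. -/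
theorem stmt11 (n : ℕ) (H Sp Sn : Matrix (Fin n) (Fin n) ℝ)
    (hH : H.IsHermitian) (hHu : IsUnit H) (hSp : Sp.PosDef) (hSn : Sn.PosDef)
    (Sv : Matrix (Fin n) (Fin n) ℝ) (hSv : Sv = H⁻¹ * Sp * H⁻¹)
    (Δ : Matrix (Fin n) (Fin n) ℝ) (hΔ : Δ = (Sv + Sn)⁻¹ - Sv⁻¹) :
    ∀ i j, |Δ i j| ≤ maxEig hSn.1 * (maxEig (hH.pow 2)) ^ 2 / (minEig hSp.1) ^ 2 := by
  intro i j
  have : Nonempty (Fin n) := ⟨i⟩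
  have hH2 : (H ^ 2).PosDef := by
    have := PosDef.conjTranspose_mul_self H (mulVec_injective_iff_isUnit.mpr hHu)
    rwa [hH.eq, ← sq] at this
  have hc : 0 < minEig hSp.1 / maxEig (hH.pow 2) := div_pos hSp.minEig_pos hH2.maxEig_pos
  have hSv_coercive :=
    hH.minEig_div_maxEig_sq_mul_le_inv_mul_mul_inv hHu hSp.posSemidef hH2.maxEig_pos
  subst hSv hΔ
  calc |((H⁻¹ * Sp * H⁻¹ + Sn)⁻¹ - (H⁻¹ * Sp * H⁻¹)⁻¹) i j|
      ≤ maxEig hSn.1 / (minEig hSp.1 / maxEig (hH.pow 2)) ^ 2 :=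
        abs_inv_add_sub_inv_apply_le hc hSv_coercive hSn.posSemidef i j
    _ = maxEig hSn.1 * (maxEig (hH.pow 2)) ^ 2 / (minEig hSp.1) ^ 2 := by
        rw [div_pow, div_div_eq_mul_div]
end

section
/- Let H be a 2N×2N real symmetric invertible matrix. Let Σ_pp, Σ_qq, Σ_pq be N×N diagonal matrices such that Σ_p := [[Σ_pp, Σ_pq],[Σ_pq, Σ_qq]] is positive definite, and let Σ_nv, Σ_nθ, Σ_nvθ be N×N diagonal matrices such that Σ_n := [[Σ_nv, Σ_nvθ],[Σ_nvθ, Σ_nθ]] is positive definite. For each i set σ_n^i := Σ_nv(i,i) + Σ_nθ(i,i) + √((Σ_nv(i,i) − Σ_nθ(i,i))² + 4·Σ_nvθ(i,i)²) and σ_p^i := Σ_pp(i,i) + Σ_qq(i,i) − √((Σ_pp(i,i) − Σ_qq(i,i))² + 4·Σ_pq(i,i)²). Let Σ_v := H⁻¹ Σ_p H⁻¹ and Δ := (Σ_v + Σ_n)⁻¹ − Σ_v⁻¹. Then for all indices i, j: |Δ(i,j)| ≤ 2·(λmax(H²))² · (max_i σ_n^i) / (min_i σ_p^i)², where λmax(A)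 denotes the largest eigenvalue of a real symmetric matrix A. -/
/-
Write Δ = -Σ_v⁻¹ Σ_n (Σ_v + Σ_n)⁻¹. Because all blocks are diagonal, the quadratic forms of Σ_p
and Σ_n split into one 2×2 form per bus, whose extreme eigenvalues are σ_p^i / 2 and σ_n^i / 2;
hence Σ_p ⪰ (min σ_p / 2) I and Σ_n ⪯ (max σ_n / 2) I. Substituting x = H y and using
|H y|² ≤ λmax(H²) |y|² gives Σ_v ⪰ γ I with γ = min σ_p / (2 λmax(H²)), and also Σ_v + Σ_n ⪰ γ I.
So the rows of Σ_v⁻¹ and the columns of (Σ_v + Σ_n)⁻¹ have length at most 1 / γ, and the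
Σ_n-form of two such vectors is at most (max σ_n / 2) / γ² in absolute value.
-/

open Matrix

section QuadraticForm

variable {n : Type*} [Fintype n]

lemma dotProduct_self_nonneg (x : n → ℝ) : 0 ≤ x ⬝ᵥ x := by
  simpa using dotProduct_star_self_nonneg x

lemma two_mul_abs_dotProduct_mulVec_le {B : Matrix n n ℝ} (hB : B.PosSemidef) (a b : n → ℝ) :
    2 * |a ⬝ᵥ B *ᵥ b| ≤ a ⬝ᵥ B *ᵥ a + b ⬝ᵥ B *ᵥ b := by
  have hBt : Bᵀ = B := hB.isHermitian
  have hsymm : b ⬝ᵥ B *ᵥ a = a ⬝ᵥ B *ᵥ b := by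
    rw [← dotProduct_transpose_mulVec, hBt]
  have hplus := hB.dotProduct_mulVec_nonneg (a + b)
  have hminus := hB.dotProduct_mulVec_nonneg (a - b)
  simp only [star_trivial, mulVec_add, mulVec_sub, add_dotProduct, dotProduct_add,
    sub_dotProduct, dotProduct_sub, hsymm] at hplus hminus
  rw [← abs_two, ← abs_mul, abs_le]
  constructor <;> linarith

variable [DecidableEq n]

lemma mulVec_inv_mulVec_of_isUnit {A : Matrix n n ℝ} (hA : IsUnit A) (x : n → ℝ) :
    A *ᵥ A⁻¹ *ᵥ x = x := by
  rw [mulVec_mulVec, mul_nonsing_inv _ ((isUnit_iff_isUnit_det A).mp hA), one_mulVec]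

open scoped MatrixOrder in
lemma dotProduct_mulVec_le_maxEig {A : Matrix n n ℝ} (hA : A.IsHermitian) (x : n → ℝ) :
    x ⬝ᵥ A *ᵥ x ≤ maxEig hA * (x ⬝ᵥ x) := by
  have hle : A ≤ algebraMap ℝ _ (maxEig hA) := by
    refine le_algebraMap_of_spectrum_le (fun r hr => ?_) hA.isSelfAdjoint
    rw [hA.spectrum_real_eq_range_eigenvalues] at hr
    obtain ⟨k, rfl⟩ := hr
    exact le_ciSup (Set.finite_range _).bddAbove k
  simpa [sub_mulVec, Algebra.algebraMap_eq_smul_one, smul_mulVec, dotProduct_comm x]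
    using (Matrix.le_iff.mp hle).dotProduct_mulVec_nonneg x

lemma maxEig_sq_pos [Nonempty n] {H : Matrix n n ℝ} (hH : H.IsHermitian) (hHu : IsUnit H) :
    0 < maxEig (hH.pow 2) := by
  have hPD : (Hᴴ * H).PosDef := .conjTranspose_mul_self H (mulVec_injective_iff_isUnit.mpr hHu)
  rw [hH.eq, ← sq] at hPD
  obtain ⟨k⟩ := ‹Nonempty n›
  exact (hPD.eigenvalues_pos k).trans_le (le_ciSup (Set.finite_range _).bddAbove k)

lemma mulVec_dotProduct_mulVec_le_maxEig {H : Matrix n n ℝ} (hH : H.IsHermitian) (x : n → ℝ) :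
    H *ᵥ x ⬝ᵥ H *ᵥ x ≤ maxEig (hH.pow 2) * (x ⬝ᵥ x) := by
  have hHt : Hᵀ = H := hH
  calc H *ᵥ x ⬝ᵥ H *ᵥ x = x ⬝ᵥ H ^ 2 *ᵥ x := by
        conv_lhs => rw [← hHt, dotProduct_transpose_mulVec, mulVec_mulVec, hHt, ← sq]
    _ ≤ _ := dotProduct_mulVec_le_maxEig _ x

lemma mul_dotProduct_le_inv_mul_mul_inv [Nonempty n] {H S : Matrix n n ℝ} (hH : H.IsHermitian)
    (hHu : IsUnit H) {c : ℝ} (hc : 0 ≤ c) (hS : ∀ x, c * (x ⬝ᵥ x) ≤ x ⬝ᵥ S *ᵥ x) (x : n → ℝ) :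
    c / maxEig (hH.pow 2) * (x ⬝ᵥ x) ≤ x ⬝ᵥ (H⁻¹ * S * H⁻¹) *ᵥ x := by
  have hL := maxEig_sq_pos hH hHu
  have hHt : H⁻¹ᵀ = H⁻¹ := hH.inv
  set y := H⁻¹ *ᵥ x
  have hxy : x ⬝ᵥ x ≤ maxEig (hH.pow 2) * (y ⬝ᵥ y) := by
    simpa only [y, mulVec_inv_mulVec_of_isUnit hHu] using mulVec_dotProduct_mulVec_le_maxEig hH y
  calc c / maxEig (hH.pow 2) * (x ⬝ᵥ x) ≤ c * (y ⬝ᵥ y) := by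
        rw [div_mul_eq_mul_div, div_le_iff₀ hL, mul_assoc, mul_comm (y ⬝ᵥ y)]
        exact mul_le_mul_of_nonneg_left hxy hc
    _ ≤ y ⬝ᵥ S *ᵥ y := hS y
    _ = x ⬝ᵥ (H⁻¹ * S * H⁻¹) *ᵥ x := by
        rw [← mulVec_mulVec, ← mulVec_mulVec, dotProduct_mulVec x, ← mulVec_transpose, hHt,
          dotProduct_comm]

lemma isUnit_of_forall_mul_dotProduct_le {A : Matrix n n ℝ} {c : ℝ} (hc : 0 < c)
    (hA : ∀ x, c * (x ⬝ᵥ x) ≤ x ⬝ᵥ A *ᵥ x) : IsUnit A := by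
  refine mulVec_injective_iff_isUnit.mp fun x y hxy => ?_
  have h := hA (x - y)
  rw [mulVec_sub, hxy, sub_self, dotProduct_zero] at h
  have h0 : (x - y) ⬝ᵥ (x - y) = 0 :=
    le_antisymm (nonpos_of_mul_nonpos_right h hc) (dotProduct_self_nonneg _)
  exact sub_eq_zero.mp (dotProduct_self_eq_zero.mp h0)

lemma inv_mulVec_dotProduct_le {A : Matrix n n ℝ} {c : ℝ} (hc : 0 < c)
    (hA : ∀ x, c * (x ⬝ᵥ x) ≤ x ⬝ᵥ A *ᵥ x) (x : n → ℝ) :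
    A⁻¹ *ᵥ x ⬝ᵥ A⁻¹ *ᵥ x ≤ (x ⬝ᵥ x) / c ^ 2 := by
  set y := A⁻¹ *ᵥ x
  have hcy : c * (y ⬝ᵥ y) ≤ y ⬝ᵥ x := by
    have hAu := isUnit_of_forall_mul_dotProduct_le hc hA
    simpa only [y, mulVec_inv_mulVec_of_isUnit hAu] using hA y
  -- `0 ≤ ‖c • y - x‖²` bounds `y ⬝ᵥ x` by AM-GM
  have hsq : 0 ≤ (c • y - x) ⬝ᵥ (c • y - x) := dotProduct_self_nonneg _
  simp only [sub_dotProduct, dotProduct_sub, smul_dotProduct, dotProduct_smul, smul_eq_mul,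
    dotProduct_comm x y] at hsq
  rw [le_div_iff₀ (by positivity)]
  nlinarith

lemma inv_add_sub_inv {A B : Matrix n n ℝ} (hA : IsUnit A) (hAB : IsUnit (A + B)) :
    (A + B)⁻¹ - A⁻¹ = -(A⁻¹ * B * (A + B)⁻¹) := by
  have hA' := (isUnit_iff_isUnit_det A).mp hA
  have hAB' := (isUnit_iff_isUnit_det _).mp hAB
  calc (A + B)⁻¹ - A⁻¹ = A⁻¹ * A * (A + B)⁻¹ - A⁻¹ * (A + B) * (A + B)⁻¹ := by
        rw [nonsing_inv_mul _ hA', Matrix.mul_assoc, mul_nonsing_inv _ hAB', Matrix.one_mul,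
          Matrix.mul_one]
    _ = -(A⁻¹ * B * (A + B)⁻¹) := by
        rw [← Matrix.sub_mul, ← Matrix.mul_sub, sub_add_cancel_left, Matrix.mul_neg,
          Matrix.neg_mul]

lemma abs_inv_add_sub_inv_apply_le {A B : Matrix n n ℝ} {γ c : ℝ} (hγ : 0 < γ)
    (hA : ∀ x, γ * (x ⬝ᵥ x) ≤ x ⬝ᵥ A *ᵥ x) (hB : B.PosSemidef)
    (hBc : ∀ x, x ⬝ᵥ B *ᵥ x ≤ c * (x ⬝ᵥ x)) (i j : n) :
    |((A + B)⁻¹ - A⁻¹) i j| ≤ c / γ ^ 2 := by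
  have hBnn (x : n → ℝ) : 0 ≤ x ⬝ᵥ B *ᵥ x := by
    simpa using hB.dotProduct_mulVec_nonneg x
  have hAB (x : n → ℝ) : γ * (x ⬝ᵥ x) ≤ x ⬝ᵥ (A + B) *ᵥ x := by
    rw [add_mulVec, dotProduct_add]
    linarith [hA x, hBnn x]
  have hAt (x : n → ℝ) : γ * (x ⬝ᵥ x) ≤ x ⬝ᵥ Aᵀ *ᵥ x := by
    rw [dotProduct_transpose_mulVec]
    exact hA x
  have he (k : n) : Pi.single k 1 ⬝ᵥ Pi.single k (1 : ℝ) = 1 := by simp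
  have hrow : A⁻¹.row i ⬝ᵥ A⁻¹.row i ≤ 1 / γ ^ 2 := by
    simpa [← transpose_nonsing_inv, mulVec_single_one, he] using
      inv_mulVec_dotProduct_le hγ hAt (Pi.single i 1)
  have hcol : (A + B)⁻¹.col j ⬝ᵥ (A + B)⁻¹.col j ≤ 1 / γ ^ 2 := by
    simpa [mulVec_single_one, he] using inv_mulVec_dotProduct_le hγ hAB (Pi.single j 1)
  have hc : 0 ≤ c := by simpa [he] using (hBnn (Pi.single i 1)).trans (hBc _)
  rw [inv_add_sub_inv (isUnit_of_forall_mul_dotProduct_le hγ hA)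
    (isUnit_of_forall_mul_dotProduct_le hγ hAB), Matrix.neg_apply, abs_neg, mul_mul_apply]
  change |A⁻¹.row i ⬝ᵥ B *ᵥ (A + B)⁻¹.col j| ≤ _
  have hBrow := (hBc (A⁻¹.row i)).trans (mul_le_mul_of_nonneg_left hrow hc)
  have hBcol := (hBc ((A + B)⁻¹.col j)).trans (mul_le_mul_of_nonneg_left hcol hc)
  rw [mul_one_div] at hBrow hBcol
  linarith [two_mul_abs_dotProduct_mulVec_le hB (A⁻¹.row i) ((A + B)⁻¹.col j)]

end QuadraticForm

lemma sub_sqrt_div_two_mul_le_quadratic (a b c u v : ℝ) :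
    (a + c - √((a - c) ^ 2 + 4 * b ^ 2)) / 2 * (u ^ 2 + v ^ 2) ≤
      a * u ^ 2 + 2 * b * u * v + c * v ^ 2 := by
  have hs := Real.sq_sqrt (by positivity : 0 ≤ (a - c) ^ 2 + 4 * b ^ 2)
  nlinarith [sq_nonneg (2 * (a - c) * u * v - 2 * b * (u ^ 2 - v ^ 2)), sq_nonneg (u ^ 2 + v ^ 2),
    mul_nonneg (Real.sqrt_nonneg ((a - c) ^ 2 + 4 * b ^ 2)) (by positivity : 0 ≤ u ^ 2 + v ^ 2)]

lemma quadratic_le_add_sqrt_div_two_mul (a b c u v : ℝ) :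
    a * u ^ 2 + 2 * b * u * v + c * v ^ 2 ≤
      (a + c + √((a - c) ^ 2 + 4 * b ^ 2)) / 2 * (u ^ 2 + v ^ 2) := by
  have hs := Real.sq_sqrt (by positivity : 0 ≤ (a - c) ^ 2 + 4 * b ^ 2)
  nlinarith [sq_nonneg (2 * (a - c) * u * v - 2 * b * (u ^ 2 - v ^ 2)), sq_nonneg (u ^ 2 + v ^ 2),
    mul_nonneg (Real.sqrt_nonneg ((a - c) ^ 2 + 4 * b ^ 2)) (by positivity : 0 ≤ u ^ 2 + v ^ 2)]

lemma sqrt_lt_of_quadratic_pos {a b c : ℝ}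
    (h : ∀ u v : ℝ, u ≠ 0 ∨ v ≠ 0 → 0 < a * u ^ 2 + 2 * b * u * v + c * v ^ 2) :
    √((a - c) ^ 2 + 4 * b ^ 2) < a + c := by
  have ha : 0 < a := by simpa using h 1 0 (by simp)
  have hc : 0 < c := by simpa using h 0 1 (by simp)
  have hdet : 0 < a * (a * c - b ^ 2) := by
    have := h b (-a) (.inr (neg_ne_zero.mpr ha.ne'))
    linarith
  have hb : b ^ 2 < a * c := by nlinarith
  rw [Real.sqrt_lt' (by positivity)]
  nlinarith

lemma dotProduct_self_sum_elim {ι : Type*} [Fintype ι] (x : ι ⊕ ι → ℝ) :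
    x ⬝ᵥ x = ∑ i, (x (.inl i) ^ 2 + x (.inr i) ^ 2) := by
  simp [dotProduct, Fintype.sum_sum_type, Finset.sum_add_distrib, sq]

section Blocks

variable {ι : Type*} [Fintype ι] [DecidableEq ι] {A B C : Matrix ι ι ℝ}

lemma dotProduct_fromBlocks_mulVec_of_isDiag (hA : A.IsDiag) (hB : B.IsDiag) (hC : C.IsDiag)
    (x : ι ⊕ ι → ℝ) :
    x ⬝ᵥ fromBlocks A B B C *ᵥ x = ∑ i, (A i i * x (.inl i) ^ 2
      + 2 * B i i * x (.inl i) * x (.inr i) + C i i * x (.inr i) ^ 2) := by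
  rw [← hA.diagonal_diag, ← hB.diagonal_diag, ← hC.diagonal_diag]
  simp only [dotProduct, fromBlocks_mulVec, Fintype.sum_sum_type, Sum.elim_inl, Sum.elim_inr,
    Pi.add_apply, mulVec_diagonal, diag_apply, Function.comp_apply, diagonal_apply_eq,
    ← Finset.sum_add_distrib]
  refine Finset.sum_congr rfl fun i _ => ?_
  ring

lemma quadratic_pos_of_posDef_fromBlocks (hA : A.IsDiag) (hB : B.IsDiag) (hC : C.IsDiag)
    (hPD : (fromBlocks A B B C).PosDef) (i : ι) (u v : ℝ) (huv : u ≠ 0 ∨ v ≠ 0) :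
    0 < A i i * u ^ 2 + 2 * B i i * u * v + C i i * v ^ 2 := by
  set x : ι ⊕ ι → ℝ := Sum.elim (Pi.single i u) (Pi.single i v)
  have hx : x ≠ 0 := by
    rintro hx
    rcases huv with hu | hv
    · exact hu (by simpa [x] using congrFun hx (.inl i))
    · exact hv (by simpa [x] using congrFun hx (.inr i))
  have hpos := hPD.dotProduct_mulVec_pos hx
  rw [star_trivial, dotProduct_fromBlocks_mulVec_of_isDiag hA hB hC,
    Finset.sum_eq_single i (fun k _ hk => by simp [x, hk]) (by simp)] at hpos
  simpa [x] using hpos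

lemma mul_dotProduct_le_fromBlocks_of_isDiag (hA : A.IsDiag) (hB : B.IsDiag) (hC : C.IsDiag)
    {m : ℝ} (hm : ∀ i, m ≤ A i i + C i i - √((A i i - C i i) ^ 2 + 4 * B i i ^ 2))
    (x : ι ⊕ ι → ℝ) : m / 2 * (x ⬝ᵥ x) ≤ x ⬝ᵥ fromBlocks A B B C *ᵥ x := by
  rw [dotProduct_fromBlocks_mulVec_of_isDiag hA hB hC, dotProduct_self_sum_elim, Finset.mul_sum]
  refine Finset.sum_le_sum fun i _ => le_trans ?_ (sub_sqrt_div_two_mul_le_quadratic _ _ _ _ _)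
  gcongr
  exact hm i

lemma fromBlocks_dotProduct_le_of_isDiag (hA : A.IsDiag) (hB : B.IsDiag) (hC : C.IsDiag)
    {M : ℝ} (hM : ∀ i, A i i + C i i + √((A i i - C i i) ^ 2 + 4 * B i i ^ 2) ≤ M)
    (x : ι ⊕ ι → ℝ) : x ⬝ᵥ fromBlocks A B B C *ᵥ x ≤ M / 2 * (x ⬝ᵥ x) := by
  rw [dotProduct_fromBlocks_mulVec_of_isDiag hA hB hC, dotProduct_self_sum_elim, Finset.mul_sum]
  refine Finset.sum_le_sum fun i _ => (quadratic_le_add_sqrt_div_two_mul _ _ _ _ _).trans ?_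
  gcongr
  exact hM i

end Blocks

/-- first part of Corollary 1 of the paper: noise bound when both the
injection covariance `Σ_p` and the noise covariance `Σ_n` have diagonal `N×N` blocks. -/
theorem stmt12 (N : ℕ)
    (H : Matrix (Fin N ⊕ Fin N) (Fin N ⊕ Fin N) ℝ)
    (hH : H.IsHermitian) (hHu : IsUnit H)
    (Spp Sqq Spq Snv Snθ Snvθ : Matrix (Fin N) (Fin N) ℝ)
    (hSpp : Spp.IsDiag) (hSqq : Sqq.IsDiag) (hSpq : Spq.IsDiag)
    (hSnv : Snv.IsDiag) (hSnθ : Snθ.IsDiag) (hSnvθ : Snvθ.IsDiag)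
    (Sp Sn : Matrix (Fin N ⊕ Fin N) (Fin N ⊕ Fin N) ℝ)
    (hSp : Sp = Matrix.fromBlocks Spp Spq Spq Sqq) (hSpd : Sp.PosDef)
    (hSn : Sn = Matrix.fromBlocks Snv Snvθ Snvθ Snθ) (hSnd : Sn.PosDef)
    (σn σp : Fin N → ℝ)
    (hσn : ∀ i, σn i = Snv i i + Snθ i i +
      Real.sqrt ((Snv i i - Snθ i i) ^ 2 + 4 * (Snvθ i i) ^ 2))
    (hσp : ∀ i, σp i = Spp i i + Sqq i i -
      Real.sqrt ((Spp i i - Sqq i i) ^ 2 + 4 * (Spq i i) ^ 2))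
    (Sv : Matrix (Fin N ⊕ Fin N) (Fin N ⊕ Fin N) ℝ) (hSv : Sv = H⁻¹ * Sp * H⁻¹)
    (Δ : Matrix (Fin N ⊕ Fin N) (Fin N ⊕ Fin N) ℝ) (hΔ : Δ = (Sv + Sn)⁻¹ - Sv⁻¹) :
    ∀ i j, |Δ i j| ≤
      2 * (maxEig (hH.pow 2)) ^ 2 * (⨆ i, σn i) / (⨅ i, σp i) ^ 2 := by
  intro i j
  have : Nonempty (Fin N) := ⟨i.elim id id⟩
  subst hSp hSn hSv hΔ
  have hm : 0 < ⨅ k, σp k := by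
    obtain ⟨k, hk⟩ := exists_eq_ciInf_of_finite (f := σp)
    rw [← hk, hσp, sub_pos]
    exact sqrt_lt_of_quadratic_pos (quadratic_pos_of_posDef_fromBlocks hSpp hSpq hSqq hSpd k)
  have hSp_ge := mul_dotProduct_le_fromBlocks_of_isDiag hSpp hSpq hSqq
    (fun k => hσp k ▸ ciInf_le (Set.finite_range σp).bddBelow k)
  have hSn_le := fromBlocks_dotProduct_le_of_isDiag hSnv hSnvθ hSnθ
    (fun k => hσn k ▸ le_ciSup (Set.finite_range σn).bddAbove k)
  have hSv_ge := mul_dotProduct_le_inv_mul_mul_inv hH hHu (by positivity) hSp_ge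
  have hγ : 0 < (⨅ k, σp k) / 2 / maxEig (hH.pow 2) := by
    have := maxEig_sq_pos hH hHu
    positivity
  calc _ ≤ _ := abs_inv_add_sub_inv_apply_le hγ hSv_ge hSnd.posSemidef hSn_le i j
    _ = _ := by field_simp
end

section
/- Let J_vv, J_θθ, J̃_vv, J̃_θθ be N×N real matrices and set K := J_vv + J_θθ. Suppose there exists at least one pair i ≠ j with K(i,j) < 0, and let γ₂ := min{ |K(i,j)| : i ≠ j, K(i,j) < 0 } > 0. If |J̃_vv(i,j) − J_vv(i,j)| < γ₂/4 and |J̃_θθ(i,j) − J_θθ(i,j)| < γ₂/4 for all i, j, then for every pair i ≠ j: (J̃_vv + J̃_θθ)(i,j) < −γ₂/2 if and only if K(i,j) < 0. -/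
open Matrix

/-- part 2 of Theorem 6 of the paper: if the entrywise deviations of the noisy
blocks `J̃_vv, J̃_θθ` from the noiseless blocks `J_vv, J_θθ` are below `γ₂/4`, where `γ₂` is
the smallest magnitude of a negative off-diagonal entry of `K = J_vv + J_θθ`, then
thresholding `(J̃_vv + J̃_θθ)(i,j) < −γ₂/2` recovers exactly the negative off-diagonal
entries of `K`. -/
theorem stmt15 (N : ℕ) (Jvv Jθθ Jvvt Jθθt : Matrix (Fin N) (Fin N) ℝ)
    (K : Matrix (Fin N) (Fin N) ℝ) (hK : K = Jvv + Jθθ)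
    (hex : ∃ i j, i ≠ j ∧ K i j < 0)
    (γ₂ : ℝ) (hγ₂ : γ₂ = sInf {x : ℝ | ∃ i j, i ≠ j ∧ K i j < 0 ∧ x = |K i j|})
    (hγ₂pos : 0 < γ₂)
    (hnoise : ∀ i j, |Jvvt i j - Jvv i j| < γ₂ / 4 ∧ |Jθθt i j - Jθθ i j| < γ₂ / 4) :
    ∀ i j, i ≠ j → ((Jvvt + Jθθt) i j < -(γ₂ / 2) ↔ K i j < 0) := by
  intro i j hij
  have hbdd : BddBelow {x : ℝ | ∃ i j, i ≠ j ∧ K i j < 0 ∧ x = |K i j|} := by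
    refine ⟨0, ?_⟩
    rintro x ⟨a, b, -, -, rfl⟩
    exact abs_nonneg _
  have hv := (hnoise i j).1
  have hθ := (hnoise i j).2
  have hsum : |(Jvvt + Jθθt) i j - K i j| < γ₂ / 2 := by
    have : (Jvvt + Jθθt) i j - K i j
        = (Jvvt i j - Jvv i j) + (Jθθt i j - Jθθ i j) := by
      simp [hK, Matrix.add_apply]; ring
    rw [this]
    calc |(Jvvt i j - Jvv i j) + (Jθθt i j - Jθθ i j)|
        ≤ |Jvvt i j - Jvv i j| + |Jθθt i j - Jθθ i j| := abs_add_le _ _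
      _ < γ₂ / 4 + γ₂ / 4 := add_lt_add hv hθ
      _ = γ₂ / 2 := by ring
  have h1 := abs_lt.mp hsum
  constructor
  · intro h
    by_contra hKij
    push_neg at hKij
    have : (Jvvt + Jθθt) i j > -(γ₂ / 2) := by linarith [h1.1]
    linarith
  · intro hKij
    have hmem : |K i j| ∈ {x : ℝ | ∃ i j, i ≠ j ∧ K i j < 0 ∧ x = |K i j|} :=
      ⟨i, j, hij, hKij, rfl⟩
    have hle : γ₂ ≤ |K i j| := hγ₂ ▸ csInf_le hbdd hmem
    rw [abs_of_neg hKij] at hle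
    linarith [h1.2]
end

section
/- Let H be a 2N×2N real symmetric invertible matrix, P a 2N×2N real symmetric positive definite matrix, and Δ a 2N×2N real symmetric matrix such that P + Δ is positive definite. Let Σ_v := H⁻¹ P⁻¹ H⁻¹ and Σ_v^c := H⁻¹ (P + Δ)⁻¹ H⁻¹, and write Σ_v⁻¹ = [[J_vv, J_vθ],[J_θv, J_θθ]] and (Σ_v^c)⁻¹ = [[J_vv^c, J_vθ^c],[J_θv^c, J_θθ^c]] in N×N blocks. Then (Σ_v^c)⁻¹ = Σ_v⁻¹ + H Δ H, and: (1) if there exist i ≠ j with J_vv(i,j) ≠ 0, γ₁ := min{ |J_vv(i,j)| : i ≠ j, J_vv(i,j) ≠ 0 }, and every entry of H Δ H has absolute value less than γ₁/2, then for all i ≠ j: |J_vv^c(i,j)| > γ₁/2 if and only if J_vv(i,j) ≠ 0; (2) if there exist i ≠ j with (J_vv + J_θθ)(i,j) < 0, γ₂ := min{ |(J_vv + J_θθ)(i,j)| : i ≠ j, (J_vv + J_θθ)(i,j) < 0 }, and every entry of H Δ H has absolute value less than γ₂/4, then for all i ≠ j: (J_vv^c + J_θθ^c)(i,j) < −γ₂/2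 if and only if (J_vv + J_θθ)(i,j) < 0. -/
open Matrix

/-- Lemma on correlated injections: with `P` the inverse covariance of
uncorrelated injections and `Δ` its perturbation due to correlations, the inverse voltage
covariance satisfies `(Σ_v^c)⁻¹ = Σ_v⁻¹ + H Δ H`, and if the entries of `H Δ H` are below
`γ₁/2` (resp. `γ₂/4`) then Algorithm 1 (resp. Algorithm 2) still recovers the correct
topology. -/
theorem stmt17 (N : ℕ)
    (H P Δ : Matrix (Fin N ⊕ Fin N) (Fin N ⊕ Fin N) ℝ)
    (hH : H.IsSymm) (hHu : IsUnit H)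
    (hP : P.PosDef) (hΔ : Δ.IsSymm) (hPΔ : (P + Δ).PosDef)
    (Sv Svc : Matrix (Fin N ⊕ Fin N) (Fin N ⊕ Fin N) ℝ)
    (hSv : Sv = H⁻¹ * P⁻¹ * H⁻¹) (hSvc : Svc = H⁻¹ * (P + Δ)⁻¹ * H⁻¹)
    (Jvv Jθθ Jvvc Jθθc : Matrix (Fin N) (Fin N) ℝ)
    (hJvv : Jvv = (Sv⁻¹).toBlocks₁₁) (hJθθ : Jθθ = (Sv⁻¹).toBlocks₂₂)
    (hJvvc : Jvvc = (Svc⁻¹).toBlocks₁₁) (hJθθc : Jθθc = (Svc⁻¹).toBlocks₂₂)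
    (γ₁ γ₂ : ℝ)
    (hγ₁ : γ₁ = sInf {x : ℝ | ∃ i j, i ≠ j ∧ Jvv i j ≠ 0 ∧ x = |Jvv i j|})
    (hγ₂ : γ₂ = sInf {x : ℝ | ∃ i j, i ≠ j ∧ (Jvv + Jθθ) i j < 0 ∧ x = |(Jvv + Jθθ) i j|}) :
    Svc⁻¹ = Sv⁻¹ + H * Δ * H ∧
      ((∃ i j, i ≠ j ∧ Jvv i j ≠ 0) →
        (∀ i j, |(H * Δ * H) i j| < γ₁ / 2) →
        ∀ i j, i ≠ j → (γ₁ / 2 < |Jvvc i j| ↔ Jvv i j ≠ 0)) ∧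
      ((∃ i j, i ≠ j ∧ (Jvv + Jθθ) i j < 0) →
        (∀ i j, |(H * Δ * H) i j| < γ₂ / 4) →
        ∀ i j, i ≠ j → ((Jvvc + Jθθc) i j < -(γ₂ / 2) ↔ (Jvv + Jθθ) i j < 0)) := by
  have hHd : IsUnit H.det := (Matrix.isUnit_iff_isUnit_det H).mp hHu
  have key : Svc⁻¹ = Sv⁻¹ + H * Δ * H := by
    rw [hSv, hSvc, Matrix.mul_inv_rev, Matrix.mul_inv_rev,
      Matrix.nonsing_inv_nonsing_inv _ hHd,
      Matrix.nonsing_inv_nonsing_inv _ ((Matrix.isUnit_iff_isUnit_det _).mp hPΔ.isUnit),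
      Matrix.mul_inv_rev, Matrix.mul_inv_rev, Matrix.nonsing_inv_nonsing_inv _ hHd,
      Matrix.nonsing_inv_nonsing_inv _ ((Matrix.isUnit_iff_isUnit_det P).mp hP.isUnit),
      mul_assoc, add_mul, mul_add]
  have hvvc : ∀ i j, Jvvc i j = Jvv i j + (H * Δ * H) (Sum.inl i) (Sum.inl j) := by
    intro i j
    rw [hJvvc, hJvv, key]
    simp [Matrix.toBlocks₁₁, Matrix.add_apply]
  have hθθc : ∀ i j, Jθθc i j = Jθθ i j + (H * Δ * H) (Sum.inr i) (Sum.inr j) := by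
    intro i j
    rw [hJθθc, hJθθ, key]
    simp [Matrix.toBlocks₂₂, Matrix.add_apply]
  refine ⟨key, ?_, ?_⟩
  · rintro ⟨i₀, j₀, hij₀, hne₀⟩ hsmall i j hij
    set S : Set ℝ := {x : ℝ | ∃ i j, i ≠ j ∧ Jvv i j ≠ 0 ∧ x = |Jvv i j|} with hS
    have hSfin : S.Finite := by
      apply Set.Finite.subset (Set.finite_range (fun p : Fin N × Fin N => |Jvv p.1 p.2|))
      rintro x ⟨a, b, _, _, rfl⟩
      exact ⟨(a, b), rfl⟩
    have hSne : S.Nonempty := ⟨|Jvv i₀ j₀|, i₀, j₀, hij₀, hne₀, rfl⟩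
    have hmem : γ₁ ∈ S := hγ₁ ▸ hSne.csInf_mem hSfin
    obtain ⟨a, b, -, hab, heq⟩ := hmem
    have hγpos : 0 < γ₁ := heq ▸ abs_pos.mpr hab
    have hle : ∀ a b, a ≠ b → Jvv a b ≠ 0 → γ₁ ≤ |Jvv a b| := fun a b h1 h2 =>
      hγ₁ ▸ csInf_le hSfin.bddBelow ⟨a, b, h1, h2, rfl⟩
    have he := abs_lt.mp (hsmall (Sum.inl i) (Sum.inl j))
    rw [hvvc i j]
    constructor
    · intro hgt
      by_contra h0
      rw [h0, zero_add] at hgt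
      exact absurd (hsmall (Sum.inl i) (Sum.inl j)) (not_lt.mpr hgt.le)
    · intro hne'
      have h1 := hle i j hij hne'
      have h2 : |Jvv i j| ≤ |Jvv i j + (H * Δ * H) (Sum.inl i) (Sum.inl j)| + |(H * Δ * H) (Sum.inl i) (Sum.inl j)| := by
        simpa using abs_add_le (Jvv i j + (H * Δ * H) (Sum.inl i) (Sum.inl j)) (-(H * Δ * H) (Sum.inl i) (Sum.inl j))
      have h3 := hsmall (Sum.inl i) (Sum.inl j)
      linarith
  · rintro ⟨i₀, j₀, hij₀, hne₀⟩ hsmall i j hij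
    set S : Set ℝ := {x : ℝ | ∃ i j, i ≠ j ∧ (Jvv + Jθθ) i j < 0 ∧ x = |(Jvv + Jθθ) i j|} with hS
    have hSfin : S.Finite := by
      apply Set.Finite.subset (Set.finite_range (fun p : Fin N × Fin N => |(Jvv + Jθθ) p.1 p.2|))
      rintro x ⟨a, b, _, _, rfl⟩
      exact ⟨(a, b), rfl⟩
    have hSne : S.Nonempty := ⟨|(Jvv + Jθθ) i₀ j₀|, i₀, j₀, hij₀, hne₀, rfl⟩
    have hmem : γ₂ ∈ S := hγ₂ ▸ hSne.csInf_mem hSfin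
    obtain ⟨a, b, -, hab, heq⟩ := hmem
    have hγpos : 0 < γ₂ := heq ▸ abs_pos.mpr (ne_of_lt hab)
    have hle : ∀ a b, a ≠ b → (Jvv + Jθθ) a b < 0 → (Jvv + Jθθ) a b ≤ -γ₂ := by
      intro a b h1 h2
      have := hγ₂ ▸ csInf_le hSfin.bddBelow (⟨a, b, h1, h2, rfl⟩ : |(Jvv + Jθθ) a b| ∈ S)
      rw [abs_of_neg h2] at this
      linarith
    have he1 := abs_lt.mp (hsmall (Sum.inl i) (Sum.inl j))
    have he2 := abs_lt.mp (hsmall (Sum.inr i) (Sum.inr j))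
    have hsum : (Jvvc + Jθθc) i j = (Jvv + Jθθ) i j + ((H * Δ * H) (Sum.inl i) (Sum.inl j) + (H * Δ * H) (Sum.inr i) (Sum.inr j)) := by
      simp only [Matrix.add_apply, hvvc i j, hθθc i j]; ring
    rw [hsum]
    constructor
    · intro hlt
      by_contra h0
      push_neg at h0
      linarith
    · intro hlt
      have := hle i j hij hlt
      linarith
end
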